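/- arXiv:1102.4172 — 2 statements merged into one kernel-verified Lean document; each statement's English description precedes it below -/
import Mathlib

section
/- Let M be a group with a normal subgroup M⁰, let T ≤ B be subgroups of M⁰ such that: (i) N_{M⁰}(B) = B, (ii) B ∩ N_{M⁰}(T) = T, (iii) for every m ∈ M there exists m₁ ∈ M⁰ with m⁻¹Bm = m₁⁻¹Bm₁, and (iv) any two conjugates of T contained in B are conjugate by an element of B. Then N_M(T)/T is the (internal) semidirect product of the normal subgroup N_{M⁰}(T)/T by the subgroup N_M(T,B)/T, where N_M(T,B) denotes the simultaneous normalizer of T and B in M. -/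
/-!
Given `n ∈ N(T)`, hypothesis (iii) yields `k ∈ M⁰` with `y = k⁻¹ n ∈ N(B)`. Then `y T y⁻¹ ≤ y B y⁻¹ = B`,
so by (iv) some `b ∈ B` carries `y T y⁻¹` back to `T`, i.e. `b y ∈ N(T) ∩ N(B)`, and
`n = (k b⁻¹) (b y)` with `k b⁻¹ = n (b y)⁻¹ ∈ N(T) ∩ M⁰`. The intersection `N_{M⁰}(T) ∩ N(B)` is
`N(T) ∩ B = T` by (i) and (ii).
-/

open scoped Pointwise

namespace Subgroup

variable {G : Type*} [Group G]

theorem mem_conj_smul_iff {g x : G} {H : Subgroup G} :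
    x ∈ MulAut.conj g • H ↔ g⁻¹ * x * g ∈ H := by
  rw [mem_pointwise_smul_iff_inv_smul_mem, ← map_inv, MulAut.smul_def, MulAut.conj_apply, inv_inv]

theorem conj_smul_eq_conj_smul_iff {g k : G} {H : Subgroup G} :
    MulAut.conj g • H = MulAut.conj k • H ↔ ∀ x, g⁻¹ * x * g ∈ H ↔ k⁻¹ * x * k ∈ H := by
  simp only [Subgroup.ext_iff, mem_conj_smul_iff]

theorem mem_normalizer_iff_conj_smul_eq {g : G} {H : Subgroup G} :
    g ∈ normalizer (H : Set G) ↔ MulAut.conj g • H = H :=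
  mem_normalizer_iff_map_conj_eq

theorem inv_mul_mem_normalizer_of_conj_smul_eq {g k : G} {H : Subgroup G}
    (h : MulAut.conj g • H = MulAut.conj k • H) : k⁻¹ * g ∈ normalizer (H : Set G) := by
  rw [mem_normalizer_iff_conj_smul_eq, map_mul, mul_smul, h, map_inv, inv_smul_smul]

theorem conj_smul_le_of_mem_normalizer {g : G} {T B : Subgroup G} (hTB : T ≤ B)
    (hg : g ∈ normalizer (B : Set G)) : MulAut.conj g • T ≤ B := by
  rw [← mem_normalizer_iff_conj_smul_eq.1 hg]
  exact pointwise_smul_le_pointwise_smul_iff.2 hTB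

theorem mul_mem_normalizer_of_conj_smul_eq {b g : G} {T : Subgroup G}
    (h : MulAut.conj b • MulAut.conj g • T = T) : b * g ∈ normalizer (T : Set G) := by
  rwa [mem_normalizer_iff_conj_smul_eq, map_mul, mul_smul]

theorem conj_mem_inf_of_normal {H N : Subgroup G} [N.Normal] {h x : G} (hh : h ∈ H)
    (hx : x ∈ H ⊓ N) : h * x * h⁻¹ ∈ H ⊓ N :=
  ⟨H.mul_mem (H.mul_mem hh hx.1) (H.inv_mem hh), Normal.conj_mem ‹_› x hx.2 h⟩

theorem exists_mul_of_mem_normalizer {K T B : Subgroup G} (hTB : T ≤ B) (hBK : B ≤ K)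
    (hB : ∀ g : G, ∃ k ∈ K, MulAut.conj g • B = MulAut.conj k • B)
    (hT : ∀ g h : G, MulAut.conj g • T ≤ B → MulAut.conj h • T ≤ B →
      ∃ b ∈ B, MulAut.conj b • MulAut.conj g • T = MulAut.conj h • T)
    {n : G} (hn : n ∈ normalizer (T : Set G)) :
    ∃ x ∈ normalizer (T : Set G) ⊓ K, ∃ y ∈ normalizer (T : Set G) ⊓ normalizer (B : Set G),
      n = x * y := by
  obtain ⟨k, hk, hnk⟩ := hB n
  have hyB := inv_mul_mem_normalizer_of_conj_smul_eq hnk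
  obtain ⟨b, hb, hbT⟩ := hT (k⁻¹ * n) 1 (conj_smul_le_of_mem_normalizer hTB hyB)
    (by rwa [map_one, one_smul])
  rw [map_one, one_smul] at hbT
  have hbyT := mul_mem_normalizer_of_conj_smul_eq hbT
  have hkb : k * b⁻¹ = n * (b * (k⁻¹ * n))⁻¹ := by group
  refine ⟨k * b⁻¹, ⟨?_, K.mul_mem hk (K.inv_mem (hBK hb))⟩,
    b * (k⁻¹ * n), ⟨hbyT, mul_mem (le_normalizer hb) hyB⟩, by group⟩
  rw [hkb]
  exact mul_mem hn ((normalizer _).inv_mem hbyT)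

end Subgroup

/-- Abstract form of Lemma 4.2(1): under hypotheses (i)-(iv), `N_M(T)/T` is the internal
semidirect product of the normal subgroup `N_{M⁰}(T)/T` by `N_M(T,B)/T`.  This is stated
at the group level: `N_{M⁰}(T)` is normalized by `N_M(T)`, every element of `N_M(T)`
factors as a product of an element of `N_{M⁰}(T)` and an element of `N_M(T,B)`, and the
intersection `N_{M⁰}(T) ∩ N_M(T,B)` equals `T`. -/
theorem normalizer_semidirect_decomposition {M : Type*} [Group M]
    (M0 T B : Subgroup M) [M0.Normal] (hTB : T ≤ B) (hBM0 : B ≤ M0)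
    (h1 : Subgroup.normalizer (B : Set M) ⊓ M0 = B)
    (h2 : B ⊓ Subgroup.normalizer (T : Set M) = T)
    (h3 : ∀ m : M, ∃ m1 ∈ M0, ∀ x : M, m⁻¹ * x * m ∈ B ↔ m1⁻¹ * x * m1 ∈ B)
    (h4 : ∀ g h : M,
      Subgroup.map (MulAut.conj g).toMonoidHom T ≤ B →
      Subgroup.map (MulAut.conj h).toMonoidHom T ≤ B →
      ∃ b ∈ B, Subgroup.map (MulAut.conj b).toMonoidHom
          (Subgroup.map (MulAut.conj g).toMonoidHom T) =
        Subgroup.map (MulAut.conj h).toMonoidHom T) :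
    (∀ n ∈ Subgroup.normalizer (T : Set M), ∀ x ∈ Subgroup.normalizer (T : Set M) ⊓ M0, n * x * n⁻¹ ∈ Subgroup.normalizer (T : Set M) ⊓ M0) ∧
    (∀ n ∈ Subgroup.normalizer (T : Set M), ∃ x ∈ Subgroup.normalizer (T : Set M) ⊓ M0, ∃ y ∈ Subgroup.normalizer (T : Set M) ⊓ Subgroup.normalizer (B : Set M),
      n = x * y) ∧
    (Subgroup.normalizer (T : Set M) ⊓ M0) ⊓ (Subgroup.normalizer (T : Set M) ⊓ Subgroup.normalizer (B : Set M)) = T := by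
  have hB : ∀ m : M, ∃ k ∈ M0, MulAut.conj m • B = MulAut.conj k • B := fun m =>
    (h3 m).imp fun _ ⟨hk, hmk⟩ => ⟨hk, Subgroup.conj_smul_eq_conj_smul_iff.2 hmk⟩
  -- `MulAut.conj g • H` is definitionally `H.map (MulAut.conj g).toMonoidHom`, so `h4` fits as is.
  refine ⟨fun n hn x hx => Subgroup.conj_mem_inf_of_normal hn hx,
    fun n hn => Subgroup.exists_mul_of_mem_normalizer hTB hBM0 hB h4 hn, ?_⟩
  calc (Subgroup.normalizer (T : Set M) ⊓ M0) ⊓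
        (Subgroup.normalizer (T : Set M) ⊓ Subgroup.normalizer (B : Set M))
      = (Subgroup.normalizer (B : Set M) ⊓ M0) ⊓ Subgroup.normalizer (T : Set M) := by
        ext; simp only [Subgroup.mem_inf]; tauto
    _ = T := by rw [h1, h2]
end

section
/- Under the same hypotheses as the previous semidirect product decomposition, the map N_M(T,B)/T → M/M⁰ given by mT ↦ mM⁰ is a group isomorphism onto M/M⁰. -/
/-! The kernel is `N(T) ∩ N(B) ∩ M⁰ = N_{M⁰}(B) ∩ N(T) = B ∩ N(T) = T`. For surjectivity, given
`m ∈ M` pick `m₁ ∈ M⁰` inducing the same conjugate of `B`; then `n = m₁⁻¹ m` normalizes `B`, so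
`nTn⁻¹ ≤ B`, and conjugacy of such subgroups in `B` gives `b ∈ B` with `bn` normalizing `T`.
As `b, m₁ ∈ M⁰`, the element `bn ∈ N(T,B)` lies in the coset `mM⁰`. -/

namespace Subgroup

variable {G : Type*} [Group G]

theorem inv_mul_mem_normalizer_of_forall_conj_mem_iff {H : Subgroup G} {g g₁ : G}
    (h : ∀ x, g⁻¹ * x * g ∈ H ↔ g₁⁻¹ * x * g₁ ∈ H) : g₁⁻¹ * g ∈ normalizer (H : Set G) := by
  rw [mem_normalizer_iff]
  intro x
  convert h (g * x * g⁻¹) using 2 <;> group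

theorem map_conj_le_of_le_of_mem_normalizer {K H : Subgroup G} {g : G} (hKH : K ≤ H)
    (hg : g ∈ normalizer (H : Set G)) : K.map (MulAut.conj g).toMonoidHom ≤ H := by
  rw [mem_normalizer_iff_map_conj_eq] at hg
  exact hg ▸ map_mono hKH

theorem map_conj_map_conj (K : Subgroup G) (a b : G) :
    (K.map (MulAut.conj b).toMonoidHom).map (MulAut.conj a).toMonoidHom =
      K.map (MulAut.conj (a * b)).toMonoidHom := by
  rw [map_map, map_mul]
  rfl

theorem map_conj_one (K : Subgroup G) : K.map (MulAut.conj (1 : G)).toMonoidHom = K := by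
  rw [map_one]
  exact map_id K

end Subgroup

open Subgroup

section

variable {M : Type*} [Group M] {M0 T B : Subgroup M}

theorem exists_mem_normalizer_inf_normalizer_mk_eq [M0.Normal] (hTB : T ≤ B) (hBM0 : B ≤ M0)
    (hconjB : ∀ m : M, ∃ m1 ∈ M0, ∀ x : M, m⁻¹ * x * m ∈ B ↔ m1⁻¹ * x * m1 ∈ B)
    (hconjT : ∀ g h : M,
      map (MulAut.conj g).toMonoidHom T ≤ B →
      map (MulAut.conj h).toMonoidHom T ≤ B →
      ∃ b ∈ B, map (MulAut.conj b).toMonoidHom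
          (map (MulAut.conj g).toMonoidHom T) =
        map (MulAut.conj h).toMonoidHom T) (m : M) :
    ∃ w ∈ normalizer (T : Set M) ⊓ normalizer (B : Set M), (w : M ⧸ M0) = m := by
  obtain ⟨m1, hm1, hm1B⟩ := hconjB m
  have hnB := inv_mul_mem_normalizer_of_forall_conj_mem_iff hm1B
  obtain ⟨b, hb, hbT⟩ := hconjT (m1⁻¹ * m) 1 (map_conj_le_of_le_of_mem_normalizer hTB hnB)
    ((map_conj_one T).symm ▸ hTB)
  rw [map_conj_map_conj, map_conj_one] at hbT
  refine ⟨b * (m1⁻¹ * m),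
    mem_inf.2 ⟨mem_normalizer_iff_map_conj_eq.2 hbT, mul_mem (le_normalizer hb) hnB⟩, ?_⟩
  simp [(QuotientGroup.eq_one_iff _).2 (hBM0 hb), (QuotientGroup.eq_one_iff _).2 hm1]

theorem mem_of_mem_normalizer_inf_normalizer_of_mem
    (hB : normalizer (B : Set M) ⊓ M0 = B) (hT : B ⊓ normalizer (T : Set M) = T) {x : M}
    (hx : x ∈ normalizer (T : Set M) ⊓ normalizer (B : Set M)) (hxM0 : x ∈ M0) : x ∈ T := by
  have hxB : x ∈ B := hB ▸ mem_inf.2 ⟨(mem_inf.1 hx).2, hxM0⟩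
  exact hT ▸ mem_inf.2 ⟨hxB, (mem_inf.1 hx).1⟩

end

/-- Abstract form of Lemma 4.2(2): under the same hypotheses, the map
`N_M(T,B)/T → M/M⁰`, `mT ↦ mM⁰`, is a group isomorphism; i.e. the composite
`N_M(T,B) → M → M/M⁰` is surjective and has kernel exactly `T`. -/
theorem normalizer_iso_component_group {M : Type*} [Group M]
    (M0 T B : Subgroup M) [M0.Normal] (hTB : T ≤ B) (hBM0 : B ≤ M0)
    (h1 : Subgroup.normalizer (B : Set M) ⊓ M0 = B)
    (h2 : B ⊓ Subgroup.normalizer (T : Set M) = T)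
    (h3 : ∀ m : M, ∃ m1 ∈ M0, ∀ x : M, m⁻¹ * x * m ∈ B ↔ m1⁻¹ * x * m1 ∈ B)
    (h4 : ∀ g h : M,
      Subgroup.map (MulAut.conj g).toMonoidHom T ≤ B →
      Subgroup.map (MulAut.conj h).toMonoidHom T ≤ B →
      ∃ b ∈ B, Subgroup.map (MulAut.conj b).toMonoidHom
          (Subgroup.map (MulAut.conj g).toMonoidHom T) =
        Subgroup.map (MulAut.conj h).toMonoidHom T) :
    (Function.Surjective fun x : (Subgroup.normalizer (T : Set M) ⊓ Subgroup.normalizer (B : Set M) : Subgroup M) =>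
      (QuotientGroup.mk (x : M) : M ⧸ M0)) ∧
    (∀ x : (Subgroup.normalizer (T : Set M) ⊓ Subgroup.normalizer (B : Set M) : Subgroup M),
      (QuotientGroup.mk (x : M) : M ⧸ M0) = 1 ↔ (x : M) ∈ T) := by
  refine ⟨fun q => ?_, fun x => ?_⟩
  · obtain ⟨m, rfl⟩ := QuotientGroup.mk_surjective q
    obtain ⟨w, hw, hwm⟩ := exists_mem_normalizer_inf_normalizer_mk_eq hTB hBM0 h3 h4 m
    exact ⟨⟨w, hw⟩, hwm⟩
  · rw [QuotientGroup.eq_one_iff]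
    exact ⟨mem_of_mem_normalizer_inf_normalizer_of_mem h1 h2 x.2, fun hx => hBM0 (hTB hx)⟩
end
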